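/- arXiv:1712.00611 — 6 statements merged into one kernel-verified Lean document; each statement's English description precedes it below -/
import Mathlib

section
/- Let f, g be arithmetic functions and suppose coefficients s_{n,k} satisfy: for every arithmetic function a and every n, C(q)·∑_{k≥1} a(k) q^k/(1−q^k) has n-th coefficient ∑_{k=1}^n s_{n,k} a(k). Then with s̃_{n,k}(g) := ∑_{j=1}^n s_{n,kj} g(j), the n-th coefficient of C(q)·∑_{k≥1} (f∗g)(k) q^k/(1−q^k) equals ∑_{k=1}^n s̃_{n,k}(g) f(k). -/
/-!
Apply the factorization to `a = f ∗ g` and expand `(f ∗ g)(k)` as a sum over the pairs `(d, e)`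
with `d * e = k`. This gives a sum of `s n (d * e) * f d * g e` over the pairs in `[1, n]²` with
`d * e ≤ n`, and it may be extended to all of `[1, n]²` because `s n m = 0` for `m > n`: it is the
coefficient of `q ^ n` in a multiple of `q ^ m`.
-/

open PowerSeries Finset

/-- Dirichlet convolution of two arithmetic functions. -/
noncomputable def dconv (f g : ℕ → ℂ) (n : ℕ) : ℂ := ∑ d ∈ n.divisors, f d * g (n / d)

theorem coeff_mul_X_pow_mul_of_lt {R : Type*} [CommSemiring R] (φ ψ : R⟦X⟧) {n m : ℕ}
    (h : n < m) : coeff n (φ * (X ^ m * ψ)) = 0 := by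
  rw [mul_left_comm, mul_comm, coeff_mul_X_pow', if_neg (by omega)]

theorem sum_mul_dconv_eq_sum_sum (t f g : ℕ → ℂ) (N : ℕ) (ht : ∀ m, N < m → t m = 0) :
    ∑ k ∈ Icc 1 N, t k * dconv f g k =
      ∑ d ∈ Icc 1 N, (∑ e ∈ Icc 1 N, t (d * e) * g e) * f d := by
  calc ∑ k ∈ Icc 1 N, t k * dconv f g k
      = ∑ k ∈ Icc 1 N, ∑ p ∈ Icc 1 N ×ˢ Icc 1 N with p.1 * p.2 = k, t k * (f p.1 * g p.2) := by
        refine sum_congr rfl fun k hk => ?_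
        rw [mem_Icc] at hk
        rw [dconv, ← Nat.sum_divisorsAntidiagonal (fun d e => f d * g e), mul_sum,
          Nat.divisorsAntidiagonal_eq_prod_filter_of_le (by omega) hk.2,
          ← Icc_add_one_left_eq_Ioc, zero_add]
    _ = ∑ p ∈ Icc 1 N ×ˢ Icc 1 N, t (p.1 * p.2) * (f p.1 * g p.2) := by
        simp_rw [sum_filter]
        rw [sum_comm]
        refine sum_congr rfl fun p hp => ?_
        rw [sum_ite_eq]
        split_ifs with hpN
        · rfl
        · simp only [mem_product, mem_Icc] at hp hpN
          have hpos : 1 ≤ p.1 * p.2 := Nat.mul_le_mul hp.1.1 hp.2.1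
          rw [ht _ (by omega), zero_mul]
    _ = ∑ d ∈ Icc 1 N, (∑ e ∈ Icc 1 N, t (d * e) * g e) * f d := by
        rw [sum_product]
        refine sum_congr rfl fun d _ => ?_
        rw [sum_mul]
        exact sum_congr rfl fun e _ => by ring

theorem lambert_factorization_dirichlet_convolution_general
    (C : PowerSeries ℂ)
    (s : ℕ → ℕ → ℂ)
    (hs : ∀ n k, s n k =
      (PowerSeries.coeff n) (C * ((X : PowerSeries ℂ) ^ k * (1 - (X : PowerSeries ℂ) ^ k)⁻¹)))
    (hfact : ∀ (a : ℕ → ℂ) (n : ℕ), 1 ≤ n →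
      (PowerSeries.coeff n)
          (C * ∑ k ∈ Finset.Icc 1 n,
            a k • ((X : PowerSeries ℂ) ^ k * (1 - (X : PowerSeries ℂ) ^ k)⁻¹)) =
        ∑ k ∈ Finset.Icc 1 n, s n k * a k)
    (f g : ℕ → ℂ) (n : ℕ) (hn : 1 ≤ n) :
    (PowerSeries.coeff n)
        (C * ∑ k ∈ Finset.Icc 1 n,
          dconv f g k • ((X : PowerSeries ℂ) ^ k * (1 - (X : PowerSeries ℂ) ^ k)⁻¹)) =
      ∑ k ∈ Finset.Icc 1 n, (∑ j ∈ Finset.Icc 1 n, s n (k * j) * g j) * f k := by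
  have hs_vanish : ∀ m, n < m → s n m = 0 := fun m hm => by
    rw [hs]
    exact coeff_mul_X_pow_mul_of_lt _ _ hm
  rw [hfact (dconv f g) n hn]
  exact sum_mul_dconv_eq_sum_sum (s n) f g n hs_vanish

/-- If `s n k` are factorization coefficients for `C(q)` (so that for every
arithmetic function `a` the n-th coefficient of `C(q) ∑_{k≥1} a(k) q^k/(1−q^k)` is
`∑_{k=1}^n s n k * a k`), then with `s̃_{n,k}(g) = ∑_{j=1}^n s n (k*j) g(j)` the n-th
coefficient of `C(q) ∑_{k≥1} (f∗g)(k) q^k/(1−q^k)` equals `∑_{k=1}^n s̃_{n,k}(g) f(k)`. -/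
theorem lambert_factorization_dirichlet_convolution
    (C : PowerSeries ℂ) (hC : constantCoeff C ≠ 0)
    (s : ℕ → ℕ → ℂ)
    (hs : ∀ n k, s n k =
      (PowerSeries.coeff n) (C * ((X : PowerSeries ℂ) ^ k * (1 - (X : PowerSeries ℂ) ^ k)⁻¹)))
    (hfact : ∀ (a : ℕ → ℂ) (n : ℕ), 1 ≤ n →
      (PowerSeries.coeff n)
          (C * ∑ k ∈ Finset.Icc 1 n,
            a k • ((X : PowerSeries ℂ) ^ k * (1 - (X : PowerSeries ℂ) ^ k)⁻¹)) =
        ∑ k ∈ Finset.Icc 1 n, s n k * a k)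
    (f g : ℕ → ℂ) (n : ℕ) (hn : 1 ≤ n) :
    (PowerSeries.coeff n)
        (C * ∑ k ∈ Finset.Icc 1 n,
          dconv f g k • ((X : PowerSeries ℂ) ^ k * (1 - (X : PowerSeries ℂ) ^ k)⁻¹)) =
      ∑ k ∈ Finset.Icc 1 n, (∑ j ∈ Finset.Icc 1 n, s n (k * j) * g j) * f k :=
  lambert_factorization_dirichlet_convolution_general C s hs hfact f g n hn
end

section
/- For any arithmetic function a and all n ≥ 1: if s_{n,k} := (−1)^{n−1}[q^n] (q;q²)_∞ · q^{2k−1}/(1−q^{2k−1}) and q(n) := [q^n] 1/(q;q²)_∞ (the number of partitions of n into odd parts), then ∑_{d:(2d−1)|n} a(d) = ∑_{k=1}^n ∑_{j=1}^k (−1)^{k−1} q(n−k) s_{k,j} a(j). -/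
open PowerSeries Finset

noncomputable def PP (N : ℕ) : PowerSeries ℂ :=
  ∏ i ∈ Finset.range N, (1 - (X : PowerSeries ℂ) ^ (2 * i + 1))

lemma constantCoeff_PP (N : ℕ) : constantCoeff (PP N) = 1 := by
  simp [PP, map_prod]

lemma coeff_eq_of_dvd {m : ℕ} {f g : PowerSeries ℂ}
    (h : (X : PowerSeries ℂ) ^ (m + 1) ∣ f - g) :
    (coeff m) f = (coeff m) g := by
  have := (X_pow_dvd_iff.mp h) m (Nat.lt_succ_self m)
  rw [map_sub, sub_eq_zero] at this
  exact this

lemma X_pow_dvd_PP_sub {N M : ℕ} (h : N ≤ M) :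
    (X : PowerSeries ℂ) ^ N ∣ PP M - PP N := by
  induction M with
  | zero => interval_cases N; simp
  | succ M ih =>
    rcases eq_or_lt_of_le h with rfl | hlt
    · simp
    · have hNM : N ≤ M := Nat.lt_succ_iff.mp hlt
      have : PP (M + 1) - PP N = (PP M - PP N) - PP M * (X : PowerSeries ℂ) ^ (2 * M + 1) := by
        rw [PP, Finset.prod_range_succ, ← PP]
        ring
      rw [this]
      refine dvd_sub (ih hNM) (Dvd.dvd.mul_left ?_ _)
      exact pow_dvd_pow _ (by omega)

lemma coeff_PP_mul_stable {m N M : ℕ} (h1 : m < N) (h2 : N ≤ M) (C : PowerSeries ℂ) :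
    (coeff m) (PP M * C) = (coeff m) (PP N * C) := by
  apply coeff_eq_of_dvd
  have : PP M * C - PP N * C = (PP M - PP N) * C := by ring
  rw [this]
  exact Dvd.dvd.mul_right (dvd_trans (pow_dvd_pow _ h1) (X_pow_dvd_PP_sub h2)) _

lemma coeff_PP_inv_stable {m N M : ℕ} (h1 : m < N) (h2 : N ≤ M) :
    (coeff m) (PP M)⁻¹ = (coeff m) (PP N)⁻¹ := by
  have hM : constantCoeff (PP M) ≠ 0 := by rw [constantCoeff_PP]; exact one_ne_zero
  have hN : constantCoeff (PP N) ≠ 0 := by rw [constantCoeff_PP]; exact one_ne_zero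
  have h1' : (PP M)⁻¹ * PP M = 1 := PowerSeries.inv_mul_cancel _ hM
  have h2' : (PP N)⁻¹ * PP N = 1 := PowerSeries.inv_mul_cancel _ hN
  apply coeff_eq_of_dvd
  have key : (PP M)⁻¹ - (PP N)⁻¹ = (PP M)⁻¹ * (PP N)⁻¹ * (PP N - PP M) := by
    linear_combination (PP N)⁻¹ * h1' - (PP M)⁻¹ * h2'
  rw [key]
  refine Dvd.dvd.mul_left ?_ _
  have : (X : PowerSeries ℂ) ^ N ∣ PP N - PP M := by
    have := X_pow_dvd_PP_sub h2
    rw [show PP N - PP M = -(PP M - PP N) by ring]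
    exact dvd_neg.mpr this
  exact dvd_trans (pow_dvd_pow _ h1) this

lemma geom_inv (t : ℕ) (ht : 1 ≤ t) :
    (1 - (X : PowerSeries ℂ) ^ t)⁻¹ = PowerSeries.mk (fun m => if t ∣ m then 1 else 0) := by
  have hc : constantCoeff (1 - (X : PowerSeries ℂ) ^ t) ≠ 0 := by
    simp [zero_pow (by omega : t ≠ 0)]
  rw [PowerSeries.inv_eq_iff_mul_eq_one hc]
  ext m
  rw [mul_sub, mul_one, map_sub, PowerSeries.coeff_mul_X_pow']
  rcases Nat.eq_zero_or_pos m with rfl | hm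
  · simp only [PowerSeries.coeff_zero_eq_constantCoeff, PowerSeries.coeff_mk, Nat.dvd_zero,
      if_pos, map_one]
    rw [if_neg (by omega)]
    simp
  · have hm1 : (coeff m) (1 : PowerSeries ℂ) = 0 := by
      simp only [PowerSeries.coeff_one, if_neg (by omega : ¬ m = 0)]
    rw [hm1, PowerSeries.coeff_mk]
    by_cases hle : t ≤ m
    · simp only [hle, if_true, PowerSeries.coeff_mk]
      have : t ∣ m ↔ t ∣ m - t := by
        constructor
        · intro h; exact (Nat.dvd_sub h dvd_rfl)
        · intro h
          have := Nat.dvd_add h (dvd_refl t)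
          rwa [Nat.sub_add_cancel hle] at this
      by_cases hd : t ∣ m
      · simp [hd, this.mp hd]
      · rw [if_neg hd, if_neg (fun h => hd (this.mpr h))]
        simp
    · have hnd : ¬ t ∣ m := fun h => hle (Nat.le_of_dvd hm h)
      simp [hle, hnd]

noncomputable def GG (j : ℕ) : PowerSeries ℂ :=
  (X : PowerSeries ℂ) ^ (2 * j - 1) * (1 - (X : PowerSeries ℂ) ^ (2 * j - 1))⁻¹

lemma coeff_GG {j m : ℕ} (hj : 1 ≤ j) (hm : 1 ≤ m) :
    (coeff m) (GG j) = if (2 * j - 1) ∣ m then 1 else 0 := by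
  set t := 2 * j - 1 with hts
  have ht : 1 ≤ t := by omega
  rw [GG, ← hts, geom_inv t ht, mul_comm, PowerSeries.coeff_mul_X_pow']
  by_cases hle : t ≤ m
  · rw [if_pos hle, PowerSeries.coeff_mk]
    have hiff : t ∣ m ↔ t ∣ m - t := by
      constructor
      · intro h; exact Nat.dvd_sub h dvd_rfl
      · intro h
        have := Nat.dvd_add h (dvd_refl t)
        rwa [Nat.sub_add_cancel hle] at this
    by_cases hd : t ∣ m
    · simp [hd, hiff.mp hd]
    · rw [if_neg hd, if_neg (fun h => hd (hiff.mpr h))]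
  · have hnd : ¬ t ∣ m := fun h => hle (Nat.le_of_dvd (by omega) h)
    simp [hle, hnd]

lemma coeff_PP_mul_GG_zero (N : ℕ) {k j : ℕ} (h : k < 2 * j - 1) :
    (coeff k) (PP N * GG j) = 0 := by
  have hdvd : (X : PowerSeries ℂ) ^ (2 * j - 1) ∣ PP N * GG j := by
    rw [GG]
    exact Dvd.dvd.mul_left (Dvd.dvd.mul_right dvd_rfl _) _
  exact (X_pow_dvd_iff.mp hdvd) k h

/-- with `s k j = (−1)^{k−1} [q^k] (q;q²)_∞ q^{2j−1}/(1−q^{2j−1})` and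
`pOdd n = [q^n] 1/(q;q²)_∞` (the number of partitions of n into odd parts), one has
`∑_{d : (2d−1)∣n} a(d) = ∑_{k=1}^n ∑_{j=1}^k (−1)^{k−1} pOdd(n−k) s_{k,j} a(j)`.
The infinite product `(q;q²)_∞ = ∏_{i≥0}(1−q^{2i+1})` is truncated at level `n`, which
does not affect the coefficients extracted. -/
theorem restricted_divisor_sum_odd_parts_factorization (a : ℕ → ℂ)
    (pOdd : ℕ → ℂ)
    (hp : ∀ n, pOdd n =
      (PowerSeries.coeff n)
        ((∏ i ∈ Finset.range (n + 1), (1 - (X : PowerSeries ℂ) ^ (2 * i + 1)))⁻¹))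
    (s : ℕ → ℕ → ℂ)
    (hs : ∀ n k, s n k = (-1 : ℂ) ^ (n - 1) *
      (PowerSeries.coeff n)
        ((∏ i ∈ Finset.range (n + 1), (1 - (X : PowerSeries ℂ) ^ (2 * i + 1))) *
          ((X : PowerSeries ℂ) ^ (2 * k - 1) * (1 - (X : PowerSeries ℂ) ^ (2 * k - 1))⁻¹)))
    (n : ℕ) (hn : 1 ≤ n) :
    (∑ d ∈ Finset.Icc 1 n, if (2 * d - 1) ∣ n then a d else 0) =
      ∑ k ∈ Finset.Icc 1 n, ∑ j ∈ Finset.Icc 1 k,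
        (-1 : ℂ) ^ (k - 1) * pOdd (n - k) * s k j * a j := by
  have hp' : ∀ m, pOdd m = (coeff m) (PP (m + 1))⁻¹ := fun m => hp m
  have hs' : ∀ k j, s k j = (-1 : ℂ) ^ (k - 1) *
      (coeff k) (PP (k + 1) * GG j) := fun k j => hs k j
  -- Step A: rewrite each term of the RHS
  have stepA : ∀ k ∈ Finset.Icc 1 n, ∀ j ∈ Finset.Icc 1 k,
      (-1 : ℂ) ^ (k - 1) * pOdd (n - k) * s k j * a j =
      (coeff k) (PP (n + 1) * GG j) * pOdd (n - k) * a j := by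
    intro k hk j hj
    simp only [Finset.mem_Icc] at hk hj
    rw [hs' k j]
    have hsq : ((-1 : ℂ)) ^ (k - 1) * ((-1 : ℂ)) ^ (k - 1) = 1 := by
      rw [← pow_add]
      exact Even.neg_one_pow ⟨k - 1, by ring⟩
    have hstab : (coeff k) (PP (k + 1) * GG j) = (coeff k) (PP (n + 1) * GG j) :=
      (coeff_PP_mul_stable (Nat.lt_succ_self k) (by omega) (GG j)).symm
    rw [hstab]
    calc (-1:ℂ)^(k-1) * pOdd (n-k) * ((-1:ℂ)^(k-1) * (coeff k) (PP (n + 1) * GG j)) * a j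
        = (((-1:ℂ))^(k-1) * ((-1:ℂ))^(k-1)) * ((coeff k) (PP (n + 1) * GG j) * pOdd (n-k) * a j) := by
          ring
      _ = (coeff k) (PP (n + 1) * GG j) * pOdd (n-k) * a j := by rw [hsq]; ring
  rw [Finset.sum_congr rfl (fun k hk => Finset.sum_congr rfl (stepA k hk))]
  -- Step B: extend inner sum over j to Icc 1 n
  have stepB : ∀ k ∈ Finset.Icc 1 n,
      (∑ j ∈ Finset.Icc 1 k, (coeff k) (PP (n + 1) * GG j) * pOdd (n - k) * a j) =
      ∑ j ∈ Finset.Icc 1 n, (coeff k) (PP (n + 1) * GG j) * pOdd (n - k) * a j := by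
    intro k hk
    simp only [Finset.mem_Icc] at hk
    apply Finset.sum_subset
    · intro x hx; simp only [Finset.mem_Icc] at *; omega
    · intro j hjn hjk
      simp only [Finset.mem_Icc] at hjn hjk
      have hkj : k < 2 * j - 1 := by omega
      rw [coeff_PP_mul_GG_zero (n + 1) hkj, zero_mul, zero_mul]
  rw [Finset.sum_congr rfl stepB, Finset.sum_comm]
  -- Step C/D/E: compute the inner sum over k for fixed j
  have hrange : Finset.range (n + 1) = insert 0 (Finset.Icc 1 n) := by
    ext x; simp only [Finset.mem_range, Finset.mem_insert, Finset.mem_Icc]; omega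
  have stepE : ∀ j ∈ Finset.Icc 1 n,
      (∑ k ∈ Finset.Icc 1 n, (coeff k) (PP (n + 1) * GG j) * pOdd (n - k) * a j) =
      (if (2 * j - 1) ∣ n then (1:ℂ) else 0) * a j := by
    intro j hj
    simp only [Finset.mem_Icc] at hj
    rw [← Finset.sum_mul]
    congr 1
    have hins : (∑ k ∈ Finset.Icc 1 n, (coeff k) (PP (n + 1) * GG j) * pOdd (n - k)) =
        ∑ k ∈ Finset.range (n + 1), (coeff k) (PP (n + 1) * GG j) * pOdd (n - k) := by
      rw [hrange, Finset.sum_insert (by simp)]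
      rw [coeff_PP_mul_GG_zero (n + 1) (by omega : 0 < 2 * j - 1), zero_mul, zero_add]
    rw [hins]
    have hpO : ∀ k ∈ Finset.range (n + 1), (coeff k) (PP (n + 1) * GG j) * pOdd (n - k) =
        (coeff k) (PP (n + 1) * GG j) * (coeff (n - k)) (PP (n + 1))⁻¹ := by
      intro k hk
      simp only [Finset.mem_range] at hk
      rw [hp' (n - k)]
      congr 1
      exact (coeff_PP_inv_stable (Nat.lt_succ_self (n - k)) (by omega : n - k + 1 ≤ n + 1)).symm
    rw [Finset.sum_congr rfl hpO]
    have hmul : (∑ k ∈ Finset.range (n + 1),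
        (coeff k) (PP (n + 1) * GG j) * (coeff (n - k)) (PP (n + 1))⁻¹) =
        (coeff n) ((PP (n + 1) * GG j) * (PP (n + 1))⁻¹) := by
      rw [PowerSeries.coeff_mul, Finset.Nat.sum_antidiagonal_eq_sum_range_succ_mk]
    rw [hmul]
    have hcancel : (PP (n + 1) * GG j) * (PP (n + 1))⁻¹ = GG j := by
      have h1 : (PP (n + 1))⁻¹ * PP (n + 1) = 1 :=
        PowerSeries.inv_mul_cancel _ (by rw [constantCoeff_PP]; exact one_ne_zero)
      calc (PP (n + 1) * GG j) * (PP (n + 1))⁻¹ = GG j * ((PP (n + 1))⁻¹ * PP (n + 1)) := by ring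
        _ = GG j := by rw [h1, mul_one]
    rw [hcancel, coeff_GG (by omega) hn]
  rw [Finset.sum_congr rfl stepE]
  apply Finset.sum_congr rfl
  intro d hd
  split_ifs with h
  · rw [one_mul]
  · rw [zero_mul]
end

section
/- (Identity of Merca) For variables x_1,…,x_n and scalars a_1,…,a_n: ∑_{k=1}^n a_k x_k/(1−x_k) = (∏_{k=1}^n 1/(1−x_k)) · ∑_{k=1}^n ∑_{1≤i_1<…<i_k≤n} (−1)^{k−1}(a_{i_1}+⋯+a_{i_k}) x_{i_1}⋯x_{i_k}. -/
/-!
Clearing the denominator `∏ (1 - x_k)`, the identity becomes the polynomial identity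
`∑_k a_k x_k ∏_{j ≠ k} (1 - x_j) = ∑_{S ≠ ∅} (-1)^{|S|-1} (∑_{i ∈ S} a_i) ∏_{i ∈ S} x_i`.
Exchanging the sums on the right, the coefficient of `a_k` is the signed sum of `∏_S x` over the
sets `S = insert k T` with `T ⊆ s \ {k}`, which is `x_k ∏_{j ≠ k} (1 - x_j)` by expanding
the product.
-/

open Finset

section CommRing

variable {ι R : Type*} [CommRing R]

theorem prod_one_sub_eq_sum_powerset (s : Finset ι) (x : ι → R) :
    ∏ j ∈ s, (1 - x j) = ∑ T ∈ s.powerset, (-1) ^ T.card * ∏ i ∈ T, x i := by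
  simp only [sub_eq_add_neg, prod_one_add, prod_neg]

variable [DecidableEq ι]

theorem sum_powerset_filter_mem_eq_mul_prod_erase {s : Finset ι} {k : ι} (hk : k ∈ s)
    (x : ι → R) :
    ∑ S ∈ s.powerset with k ∈ S, (-1) ^ (S.card - 1) * ∏ i ∈ S, x i =
      x k * ∏ j ∈ s.erase k, (1 - x j) := by
  have hkT : ∀ T ∈ (s.erase k).powerset, k ∉ T :=
    fun T hT => notMem_mono (mem_powerset.1 hT) (notMem_erase k s)
  conv_lhs => rw [sum_filter, ← insert_erase hk, sum_powerset_insert (notMem_erase k s)]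
  rw [sum_eq_zero fun T hT => if_neg (hkT T hT), zero_add, prod_one_sub_eq_sum_powerset,
    mul_sum]
  refine sum_congr rfl fun T hT => ?_
  rw [if_pos (mem_insert_self k T), card_insert_of_notMem (hkT T hT), Nat.add_sub_cancel,
    prod_insert (hkT T hT)]
  ring

theorem sum_nonempty_powerset_eq_sum_mul_prod_erase (s : Finset ι) (x a : ι → R) :
    ∑ S ∈ s.powerset with S.Nonempty, (-1) ^ (S.card - 1) * (∑ i ∈ S, a i) * ∏ i ∈ S, x i =
      ∑ k ∈ s, a k * (x k * ∏ j ∈ s.erase k, (1 - x j)) := by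
  simp_rw [mul_assoc, sum_mul, mul_sum]
  rw [sum_comm' (t' := s) (s' := fun k => s.powerset.filter (k ∈ ·))]
  · refine sum_congr rfl fun k hk => ?_
    rw [← sum_powerset_filter_mem_eq_mul_prod_erase hk, mul_sum]
    exact sum_congr rfl fun S _ => by ring
  · intro S k
    simp only [mem_filter, mem_powerset]
    exact ⟨fun ⟨⟨hS, _⟩, hkS⟩ => ⟨⟨hS, hkS⟩, hS hkS⟩, fun ⟨⟨hS, hkS⟩, _⟩ => ⟨⟨hS, k, hkS⟩, hkS⟩⟩

end CommRing

/-- Merca's identity: for complex numbers x_1,…,x_n (with x_k ≠ 1) and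
scalars a_1,…,a_n,
`∑_{k=1}^n a_k x_k/(1−x_k)
  = (∏_{k=1}^n 1/(1−x_k)) ∑_{∅ ≠ S ⊆ {1,…,n}} (−1)^{|S|−1} (∑_{i∈S} a_i) ∏_{i∈S} x_i`. -/
theorem merca_identity (n : ℕ) (x a : ℕ → ℂ) (hx : ∀ k ∈ Finset.range n, x k ≠ 1) :
    ∑ k ∈ Finset.range n, a k * x k / (1 - x k) =
      (∏ k ∈ Finset.range n, (1 - x k))⁻¹ *
        ∑ S ∈ (Finset.range n).powerset.filter (fun S => S.Nonempty),
          (-1 : ℂ) ^ (S.card - 1) * (∑ i ∈ S, a i) * ∏ i ∈ S, x i := by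
  have hx' : ∀ k ∈ range n, 1 - x k ≠ 0 := fun k hk => sub_ne_zero.2 (hx k hk).symm
  rw [sum_nonempty_powerset_eq_sum_mul_prod_erase, mul_sum]
  refine sum_congr rfl fun k hk => ?_
  have hrest : ∏ j ∈ (range n).erase k, (1 - x j) ≠ 0 :=
    prod_ne_zero_iff.2 fun j hj => hx' j (mem_of_mem_erase hj)
  rw [← mul_prod_erase _ _ hk]
  field_simp [hx' k hk]
end

section
/- Let C(q) be a formal power series with constant term 1, γ an arithmetic function, and define s^{(−1)}_{n,k} := ∑_{d|n} c(d−k)·γ(n/d) where c(m) := [q^m] 1/C(q) (with c(m)=0 for m<0). Define t_{k,d} := [q^k] C(q)·q^{αd+β}/(1−q^{αd+β}) for fixed integers α ≥ 1, 0 ≤ β < α. Then for all n ≥ 1 and d ≥ 1: ∑_{k=1}^n s^{(−1)}_{n,k} t_{k,d} = ∑_{d' | n, (αd+β) | d'} γ(n/d'). -/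
/-!
Put `G = q^m / (1 - q^m)` with `m = αd + β`, so that `t_{k,d} = [q^k] C·G` and `t_{0,d} = 0`. Hence
`∑_{k=1}^{e} c(e - k) t_{k,d}` is the `e`-th coefficient of `C⁻¹ · (C · G) = G`, which for `e ≥ 1`
is `1` if `m ∣ e` and `0` otherwise. Exchanging the sum over `k` with the divisor sum defining
`s⁻¹_{n,k}` leaves `∑_{e ∣ n, m ∣ e} γ(n/e)`.
-/

open PowerSeries Finset

namespace PowerSeries

variable {k : Type*} [Field k]

theorem inv_one_sub_X_pow_eq_expand {m : ℕ} (hm : m ≠ 0) :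
    (1 - X ^ m : k⟦X⟧)⁻¹ = expand m hm (mk 1) := by
  rw [PowerSeries.inv_eq_iff_mul_eq_one (by simp [hm]), ← expand_X m hm, ← map_one (expand m hm),
    ← map_sub, ← map_mul, mk_one_mul_one_sub_eq_one, map_one]

theorem coeff_X_pow_mul_inv_one_sub_X_pow (m e : ℕ) :
    coeff e (X ^ m * (1 - X ^ m : k⟦X⟧)⁻¹) = if m ∣ e ∧ 0 < e then 1 else 0 := by
  rcases eq_or_ne m 0 with rfl | hm
  · simp -- `(1 - X ^ 0)⁻¹ = 0⁻¹ = 0`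
  rw [inv_one_sub_X_pow_eq_expand hm, coeff_X_pow_mul', coeff_expand]
  simp only [coeff_mk, Pi.one_apply, Nat.dvd_sub_self_right, ← ite_and]
  refine if_congr ⟨?_, ?_⟩ rfl rfl
  · rintro ⟨hle, hdvd | hge⟩
    · exact ⟨hdvd, by omega⟩
    · exact ⟨le_antisymm hge hle ▸ dvd_rfl, by omega⟩
  · rintro ⟨hdvd, hpos⟩
    exact ⟨Nat.le_of_dvd hpos hdvd, .inl hdvd⟩

theorem sum_Icc_coeff_inv_mul_coeff_mul {C G : k⟦X⟧} (hC : constantCoeff C ≠ 0)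
    (hG : constantCoeff G = 0) {e n : ℕ} (hen : e ≤ n) :
    ∑ i ∈ Icc 1 n, (if i ≤ e then coeff (e - i) C⁻¹ else 0) * coeff i (C * G) = coeff e G := by
  have hCG : coeff 0 (C * G) = 0 := by simp [hG]
  calc ∑ i ∈ Icc 1 n, (if i ≤ e then coeff (e - i) C⁻¹ else 0) * coeff i (C * G)
      = ∑ i ∈ range (n + 1), (if i ≤ e then coeff (e - i) C⁻¹ else 0) * coeff i (C * G) := by
        refine sum_subset (fun i hi => by simp only [mem_Icc, mem_range] at hi ⊢; omega) fun i hin hi => ?_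
        obtain rfl : i = 0 := by simp only [mem_range, mem_Icc, not_and, not_le] at hin hi; omega
        rw [hCG, mul_zero]
    _ = ∑ i ∈ range (e + 1), coeff (e - i) C⁻¹ * coeff i (C * G) := by
        simp only [ite_mul, zero_mul, ← sum_filter]
        congr 1
        ext i
        simp only [mem_filter, mem_range]
        omega
    _ = coeff e (C⁻¹ * (C * G)) := by
        rw [mul_comm C⁻¹, coeff_mul, Nat.sum_antidiagonal_eq_sum_range_succ
          (fun i j => coeff i (C * G) * coeff j C⁻¹)]
        exact sum_congr rfl fun i _ => mul_comm _ _
    _ = coeff e G := by rw [← mul_assoc, PowerSeries.inv_mul_cancel C hC, one_mul]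

end PowerSeries

theorem inverse_times_t_eq_divisor_sum_general
    (C : PowerSeries ℂ) (hC : constantCoeff C = 1) (γ : ℕ → ℂ) (α β : ℕ)
    (c : ℕ → ℂ) (hc : ∀ m, c m = (PowerSeries.coeff m) C⁻¹)
    (sInv : ℕ → ℕ → ℂ)
    (hsInv : ∀ n k, sInv n k =
      ∑ d ∈ n.divisors, (if k ≤ d then c (d - k) else 0) * γ (n / d))
    (t : ℕ → ℕ → ℂ)
    (ht : ∀ k d, t k d =
      (PowerSeries.coeff k)
        (C * ((X : PowerSeries ℂ) ^ (α * d + β) * (1 - (X : PowerSeries ℂ) ^ (α * d + β))⁻¹)))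
    (n d : ℕ) :
    ∑ k ∈ Finset.Icc 1 n, sInv n k * t k d =
      ∑ d' ∈ n.divisors, if (α * d + β) ∣ d' then γ (n / d') else 0 := by
  set m := α * d + β
  have hG : constantCoeff ((X : ℂ⟦X⟧) ^ m * (1 - X ^ m)⁻¹) = 0 := by
    rw [← coeff_zero_eq_constantCoeff_apply, coeff_X_pow_mul_inv_one_sub_X_pow]
    simp
  have inner : ∀ e ∈ n.divisors,
      ∑ k ∈ Icc 1 n, (if k ≤ e then c (e - k) else 0) * t k d = if m ∣ e then 1 else 0 := by
    intro e he
    simp only [hc, ht]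
    rw [sum_Icc_coeff_inv_mul_coeff_mul (by simp [hC]) hG (Nat.divisor_le he),
      coeff_X_pow_mul_inv_one_sub_X_pow]
    simp [Nat.pos_of_mem_divisors he]
  calc ∑ k ∈ Icc 1 n, sInv n k * t k d
      = ∑ e ∈ n.divisors,
          (∑ k ∈ Icc 1 n, (if k ≤ e then c (e - k) else 0) * t k d) * γ (n / e) := by
        simp only [hsInv, sum_mul]
        rw [sum_comm]
        exact sum_congr rfl fun e _ => sum_congr rfl fun k _ => mul_right_comm _ _ _
    _ = ∑ e ∈ n.divisors, if m ∣ e then γ (n / e) else 0 :=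
        sum_congr rfl fun e he => by rw [inner e he, ite_mul, one_mul, zero_mul]

/-- with `c(m) = [q^m] 1/C(q)` (zero for negative index),
`s⁻¹_{n,k} = ∑_{d∣n} c(d−k) γ(n/d)`, and `t_{k,d} = [q^k] C(q) q^{αd+β}/(1−q^{αd+β})`,
we have `∑_{k=1}^n s⁻¹_{n,k} t_{k,d} = ∑_{d'∣n, (αd+β)∣d'} γ(n/d')`. -/
theorem inverse_times_t_eq_divisor_sum
    (C : PowerSeries ℂ) (hC : constantCoeff C = 1) (γ : ℕ → ℂ) (α β : ℕ)
    (hα : 1 ≤ α) (hβ : β < α)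
    (c : ℕ → ℂ) (hc : ∀ m, c m = (PowerSeries.coeff m) C⁻¹)
    (sInv : ℕ → ℕ → ℂ)
    (hsInv : ∀ n k, sInv n k =
      ∑ d ∈ n.divisors, (if k ≤ d then c (d - k) else 0) * γ (n / d))
    (t : ℕ → ℕ → ℂ)
    (ht : ∀ k d, t k d =
      (PowerSeries.coeff k)
        (C * ((X : PowerSeries ℂ) ^ (α * d + β) * (1 - (X : PowerSeries ℂ) ^ (α * d + β))⁻¹)))
    (n d : ℕ) (hn : 1 ≤ n) (hd : 1 ≤ d) :
    ∑ k ∈ Finset.Icc 1 n, sInv n k * t k d =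
      ∑ d' ∈ n.divisors, if (α * d + β) ∣ d' then γ (n / d') else 0 :=
  inverse_times_t_eq_divisor_sum_general C hC γ α β c hc sInv hsInv t ht n d
end

section
/- Let α ≥ 1, 0 ≤ β < α, let γ be an arithmetic function and γ̃(n) := ∑_{d|n} γ(d). With s^{(−1)}_{n,k} := ∑_{d|n} ([q^{d−k}] 1/C(q))·γ(n/d) and B_k := [q^k] C(q)·∑_{d≥1} a(d) q^{αd+β}/(1−q^{αd+β}), we have for all n ≥ 1: ∑_{k=1}^n s^{(−1)}_{n,k} B_k = ∑_{d | n, d ≡ β (mod α), d > β} a((d−β)/α) · γ̃(n/d). -/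
/-!
Let `c` be the arithmetic function placing `a(d)` at `m = α d + β` (for `d ≥ 1`), and
`L(q) = ∑ₘ c(m) qᵐ / (1 - qᵐ)` its Lambert series, whose `D`-th coefficient is `(c * 1)(D)`.
Expanding the geometric series shows that `∑_{d ≥ 1} a(d) q^{αd+β} / (1 - q^{αd+β})` is `L`, and
the summands with `d > k` do not reach `q^k`, so `B_k = [q^k] C L`. Hence
`∑_k [q^{D-k}] C⁻¹ · B_k = [q^D] C⁻¹ C L = (c * 1)(D)`, the left side is the Dirichlet
convolution `(γ * (c * 1))(n)`, and commutativity and associativity turn it into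
`(c * (γ * 1))(n) = ∑_{d ∣ n} c(d) γ̃(n/d)`.
-/

open PowerSeries Finset ArithmeticFunction
open scoped ArithmeticFunction.zeta

variable {R : Type*}

theorem coeff_X_pow_mul_inv_one_sub_X_pow {k : Type*} [Field k] {m : ℕ} (hm : m ≠ 0) (j : ℕ) :
    coeff j ((X : k⟦X⟧) ^ m * (1 - X ^ m)⁻¹) = if m ∣ j ∧ j ≠ 0 then 1 else 0 := by
  have hunit : constantCoeff (1 - X ^ m : k⟦X⟧) ≠ 0 := by simp [hm]
  have hgeom : (X : k⟦X⟧) ^ m * (1 - X ^ m)⁻¹ = mk fun j => if m ∣ j ∧ j ≠ 0 then 1 else 0 := by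
    rw [eq_comm, eq_mul_inv_iff_mul_eq hunit]
    ext j
    rw [mul_sub, mul_one, map_sub, coeff_mul_X_pow', coeff_X_pow, coeff_mk]
    rcases lt_or_ge j m with hj | hj
    · simp only [hj.not_ge, hj.ne, if_false, sub_zero, ite_eq_right_iff]
      exact fun h => absurd (Nat.le_of_dvd (Nat.pos_of_ne_zero h.2) h.1) hj.not_ge
    · obtain ⟨i, rfl⟩ := Nat.exists_eq_add_of_le hj
      by_cases hi : i = 0 <;> simp [hi, hm, Nat.dvd_add_self_left]
  rw [hgeom, coeff_mk]

section CommSemiring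

variable [CommSemiring R]

theorem coeff_mul_congr_right (f : R⟦X⟧) {g h : R⟦X⟧} {n : ℕ}
    (hgh : ∀ j ≤ n, coeff j g = coeff j h) : coeff n (f * g) = coeff n (f * h) := by
  rw [coeff_mul, coeff_mul]
  exact sum_congr rfl fun p hp => by rw [hgh p.2 (HasAntidiagonal.antidiagonal.snd_le hp)]

theorem coeff_mul_eq_sum_Icc (f : R⟦X⟧) {g : R⟦X⟧} (hg : constantCoeff g = 0) {D n : ℕ}
    (hD : D ≤ n) :
    coeff D (f * g) = ∑ k ∈ Icc 1 n, (if k ≤ D then coeff (D - k) f else 0) * coeff k g := by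
  calc coeff D (f * g)
      = ∑ k ∈ range (D + 1), coeff k g * coeff (D - k) f := by
        rw [mul_comm, coeff_mul,
          Nat.sum_antidiagonal_eq_sum_range_succ fun i j => coeff i g * coeff j f]
    _ = ∑ k ∈ Icc 1 D, coeff (D - k) f * coeff k g := by
        rw [range_eq_Ico, sum_eq_sum_Ico_succ_bot D.succ_pos, coeff_zero_eq_constantCoeff_apply, hg,
          zero_mul, zero_add, zero_add, Nat.succ_eq_add_one, Ico_add_one_right_eq_Icc]
        exact sum_congr rfl fun k _ => mul_comm _ _
    _ = ∑ k ∈ Icc 1 n, (if k ≤ D then coeff (D - k) f else 0) * coeff k g := by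
        refine sum_subset_zero_on_sdiff (Icc_subset_Icc_right hD) (fun k hk => ?_) fun k hk => ?_
        · rw [if_neg (by simp only [mem_sdiff, mem_Icc] at hk; omega), zero_mul]
        · rw [if_pos (mem_Icc.mp hk).2]

theorem sum_Icc_sum_divisors_mul_coeff (f : R⟦X⟧) {g : R⟦X⟧} (hg : constantCoeff g = 0)
    (γ : ℕ → R) (n : ℕ) :
    ∑ k ∈ Icc 1 n, (∑ D ∈ n.divisors, (if k ≤ D then coeff (D - k) f else 0) * γ (n / D)) *
        coeff k g = ∑ D ∈ n.divisors, γ (n / D) * coeff D (f * g) := by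
  simp_rw [sum_mul]
  rw [sum_comm]
  refine sum_congr rfl fun D hD => ?_
  rw [coeff_mul_eq_sum_Icc f hg (Nat.divisor_le hD), mul_sum]
  exact sum_congr rfl fun k _ => by ring

theorem sum_divisors_mul_sum_divisors_comm (γ : ℕ → R) (c : ArithmeticFunction R) (n : ℕ) :
    ∑ D ∈ n.divisors, γ (n / D) * (c * ζ) D =
      ∑ d ∈ n.divisors, c d * ∑ e ∈ (n / d).divisors, γ e := by
  let g : ArithmeticFunction R := ⟨fun m => if m = 0 then 0 else γ m, if_pos rfl⟩
  have hg : ∀ m ≠ 0, g m = γ m := fun m hm => if_neg hm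
  have hquot : ∀ D ∈ n.divisors, n / D ≠ 0 := fun D hD =>
    (Nat.div_pos (Nat.divisor_le hD) (Nat.pos_of_mem_divisors hD)).ne'
  calc ∑ D ∈ n.divisors, γ (n / D) * (c * ζ) D
      = (g * (c * ζ)) n := by
        rw [mul_apply, Nat.sum_divisorsAntidiagonal' fun x y => g x * (c * ζ) y]
        exact sum_congr rfl fun D hD => by rw [hg _ (hquot D hD)]
    _ = (c * (g * ζ)) n := by rw [mul_left_comm]
    _ = ∑ d ∈ n.divisors, c d * ∑ e ∈ (n / d).divisors, γ e := by
        rw [mul_apply, Nat.sum_divisorsAntidiagonal fun x y => c x * (g * ζ) y]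
        refine sum_congr rfl fun d _ => ?_
        rw [coe_mul_zeta_apply]
        exact congrArg _ (sum_congr rfl fun e he => hg e (Nat.pos_of_mem_divisors he).ne')

end CommSemiring

/-- The Lambert series `∑ₘ c(m) qᵐ / (1 - qᵐ)`. -/
def lambertSeries [Semiring R] (c : ArithmeticFunction R) : R⟦X⟧ :=
  mk fun D => (c * ζ) D

theorem coeff_lambertSeries [Semiring R] (c : ArithmeticFunction R) (D : ℕ) :
    coeff D (lambertSeries c) = (c * ζ) D :=
  coeff_mk _ _

theorem constantCoeff_lambertSeries [Semiring R] (c : ArithmeticFunction R) :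
    constantCoeff (lambertSeries c) = 0 := by
  rw [← coeff_zero_eq_constantCoeff_apply, coeff_lambertSeries, ArithmeticFunction.map_zero]

def progressionCoeff [Zero R] (a : ℕ → R) (α β : ℕ) : ArithmeticFunction R :=
  ⟨fun m => if m % α = β ∧ β < m then a ((m - β) / α) else 0, by simp⟩

theorem progressionCoeff_apply [Zero R] (a : ℕ → R) (α β m : ℕ) :
    progressionCoeff a α β m = if m % α = β ∧ β < m then a ((m - β) / α) else 0 :=
  rfl

theorem progressionCoeff_eq_sum_Icc [AddCommMonoid R] (a : ℕ → R) {α β m N : ℕ}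
    (hβ : β < α) (hm : m ≤ N) :
    progressionCoeff a α β m = ∑ d ∈ Icc 1 N, if α * d + β = m then a d else 0 := by
  have hα : 0 < α := Nat.zero_lt_of_lt hβ
  rw [progressionCoeff_apply]
  split_ifs with h
  · obtain ⟨hmod, hlt⟩ := h
    have hdiv : α * ((m - β) / α) = m - β := Nat.mul_div_cancel' (hmod ▸ Nat.dvd_sub_mod m)
    have hiff : ∀ d, α * d + β = m ↔ (m - β) / α = d := fun d =>
      ⟨fun h => by rw [← h, Nat.add_sub_cancel, Nat.mul_div_cancel_left d hα],
        fun h => by rw [← h]; omega⟩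
    have hpos : 1 ≤ (m - β) / α := Nat.pos_of_ne_zero fun h0 => by simp [h0] at hdiv; omega
    have hle : (m - β) / α ≤ N := (Nat.div_le_self _ _).trans (by omega)
    simp only [hiff, sum_ite_eq, mem_Icc, hpos, hle, and_self, if_true]
  · refine (sum_eq_zero fun d hd => if_neg ?_).symm
    rintro rfl
    have := Nat.mul_pos hα (mem_Icc.mp hd).1
    exact h ⟨by rw [Nat.mul_add_mod, Nat.mod_eq_of_lt hβ], by omega⟩

theorem coeff_sum_Icc_smul_X_pow_mul_inv_one_sub_X_pow {k : Type*} [Field k] (a : ℕ → k)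
    {α β D N : ℕ} (hβ : β < α) (hD : D ≤ N) :
    coeff D (∑ d ∈ Icc 1 N, a d • ((X : k⟦X⟧) ^ (α * d + β) * (1 - X ^ (α * d + β))⁻¹)) =
      coeff D (lambertSeries (progressionCoeff a α β)) := by
  rw [coeff_lambertSeries, coe_mul_zeta_apply, map_sum]
  calc ∑ d ∈ Icc 1 N, coeff D (a d • ((X : k⟦X⟧) ^ (α * d + β) * (1 - X ^ (α * d + β))⁻¹))
      = ∑ d ∈ Icc 1 N, ∑ m ∈ D.divisors, if α * d + β = m then a d else 0 := by
        refine sum_congr rfl fun d hd => ?_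
        have hpos := Nat.mul_pos (Nat.zero_lt_of_lt hβ) (mem_Icc.mp hd).1
        have : α * d + β ≠ 0 := by omega
        rw [coeff_smul, coeff_X_pow_mul_inv_one_sub_X_pow this, sum_ite_eq]
        simp [Nat.mem_divisors]
    _ = ∑ m ∈ D.divisors, progressionCoeff a α β m := by
        rw [sum_comm]
        exact sum_congr rfl fun m hm =>
          (progressionCoeff_eq_sum_Icc a hβ ((Nat.divisor_le hm).trans hD)).symm

theorem theorem2_generalized_factorization_general
    (C : PowerSeries ℂ) (hC : constantCoeff C = 1) (a γ : ℕ → ℂ) (α β : ℕ)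
    (hβ : β < α)
    (γt : ℕ → ℂ) (hγt : ∀ m, γt m = ∑ e ∈ m.divisors, γ e)
    (sInv : ℕ → ℕ → ℂ)
    (hsInv : ∀ n k, sInv n k =
      ∑ d ∈ n.divisors, (if k ≤ d then (PowerSeries.coeff (d - k)) C⁻¹ else 0) * γ (n / d))
    (B : ℕ → ℂ)
    (hB : ∀ k, B k =
      (PowerSeries.coeff k)
        (C * ∑ d ∈ Finset.Icc 1 k,
          a d • ((X : PowerSeries ℂ) ^ (α * d + β) * (1 - (X : PowerSeries ℂ) ^ (α * d + β))⁻¹)))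
    (n : ℕ) :
    ∑ k ∈ Finset.Icc 1 n, sInv n k * B k =
      ∑ d ∈ n.divisors, if d % α = β ∧ β < d then a ((d - β) / α) * γt (n / d) else 0 := by
  set c := progressionCoeff a α β
  have hB' : ∀ k, B k = coeff k (C * lambertSeries c) := fun k => by
    rw [hB]
    exact coeff_mul_congr_right C fun j hj =>
      coeff_sum_Icc_smul_X_pow_mul_inv_one_sub_X_pow a hβ hj
  have hL : constantCoeff (C * lambertSeries c) = 0 := by
    rw [map_mul, constantCoeff_lambertSeries, mul_zero]
  calc ∑ k ∈ Icc 1 n, sInv n k * B k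
      = ∑ k ∈ Icc 1 n, (∑ D ∈ n.divisors, (if k ≤ D then coeff (D - k) C⁻¹ else 0) * γ (n / D)) *
          coeff k (C * lambertSeries c) := by simp only [hsInv, hB']
    _ = ∑ D ∈ n.divisors, γ (n / D) * coeff D (C⁻¹ * (C * lambertSeries c)) :=
        sum_Icc_sum_divisors_mul_coeff _ hL γ n
    _ = ∑ D ∈ n.divisors, γ (n / D) * (c * ζ) D := by
        rw [← mul_assoc, PowerSeries.inv_mul_cancel C (by simp [hC]), one_mul]
        simp only [coeff_lambertSeries]
    _ = ∑ d ∈ n.divisors, c d * γt (n / d) := by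
        simp only [sum_divisors_mul_sum_divisors_comm, hγt]
    _ = _ := sum_congr rfl fun d _ => by rw [progressionCoeff_apply, ite_mul, zero_mul]

/-- Theorem 2: with `s⁻¹_{n,k} = ∑_{d∣n} ([q^{d−k}] 1/C(q)) γ(n/d)` and
`B_k = [q^k] C(q) ∑_{d≥1} a(d) q^{αd+β}/(1−q^{αd+β})` (terms with d > k do not contribute),
we have `∑_{k=1}^n s⁻¹_{n,k} B_k = ∑_{d∣n, d ≡ β (mod α), d > β} a((d−β)/α) γ̃(n/d)`
where `γ̃(m) = ∑_{e∣m} γ(e)`. -/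
theorem theorem2_generalized_factorization
    (C : PowerSeries ℂ) (hC : constantCoeff C = 1) (a γ : ℕ → ℂ) (α β : ℕ)
    (hα : 1 ≤ α) (hβ : β < α)
    (γt : ℕ → ℂ) (hγt : ∀ m, γt m = ∑ e ∈ m.divisors, γ e)
    (sInv : ℕ → ℕ → ℂ)
    (hsInv : ∀ n k, sInv n k =
      ∑ d ∈ n.divisors, (if k ≤ d then (PowerSeries.coeff (d - k)) C⁻¹ else 0) * γ (n / d))
    (B : ℕ → ℂ)
    (hB : ∀ k, B k =
      (PowerSeries.coeff k)
        (C * ∑ d ∈ Finset.Icc 1 k,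
          a d • ((X : PowerSeries ℂ) ^ (α * d + β) * (1 - (X : PowerSeries ℂ) ^ (α * d + β))⁻¹)))
    (n : ℕ) (hn : 1 ≤ n) :
    ∑ k ∈ Finset.Icc 1 n, sInv n k * B k =
      ∑ d ∈ n.divisors, if d % α = β ∧ β < d then a ((d - β) / α) * γt (n / d) else 0 :=
  theorem2_generalized_factorization_general C hC a γ α β hβ γt hγt sInv hsInv B hB n
end

section
/- For g : ℕ → ℂ with g(1) = 1, define D_g(n) := ∑_{j=1}^{n} ds_{2j,g}(n), where the sum stabilizes since ds_{j,g}(n) = 0 for j > Ω(n)+1. Then g ∗ (D_g + ε) = ε, i.e., D_g + ε is the Dirichlet inverse of g. -/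
open Finset

/-- `g_±(n) := g(n)` for `n ≠ 1` and `g_±(1) := −1`. -/
noncomputable def gpm (g : ℕ → ℂ) (n : ℕ) : ℂ := if n = 1 then -1 else g n

/-- The iterated functions `ds_{j,g}`. -/
noncomputable def ds (g : ℕ → ℂ) : ℕ → ℕ → ℂ
  | 0, _ => 0
  | 1, n => gpm g n
  | j + 2, n => ∑ d ∈ n.divisors.filter (fun d => 1 < d), g d * ds g (j + 1) (n / d)

lemma ds_succ (g : ℕ → ℂ) {j : ℕ} (hj : 1 ≤ j) (n : ℕ) :
    ds g (j + 1) n = ∑ d ∈ n.divisors.filter (fun d => 1 < d), g d * ds g j (n / d) := by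
  obtain ⟨k, rfl⟩ : ∃ k, j = k + 1 := ⟨j - 1, by omega⟩
  rfl

lemma ds_of_lt (g : ℕ → ℂ) : ∀ j n, 1 ≤ n → n < j → ds g j n = 0 := by
  intro j
  induction j using Nat.strong_induction_on with
  | _ j IH =>
    match j with
    | 0 => intro n h1 h2; omega
    | 1 => intro n h1 h2; omega
    | k + 2 =>
      intro n h1 h2
      show (∑ d ∈ n.divisors.filter (fun d => 1 < d), g d * ds g (k + 1) (n / d)) = 0
      apply Finset.sum_eq_zero
      intro d hd
      simp only [Finset.mem_filter, Nat.mem_divisors] at hd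
      have h3 : 1 ≤ n / d :=
        (Nat.one_le_div_iff (by omega)).mpr (Nat.le_of_dvd (by omega) hd.1.1)
      have h4 : n / d < n := Nat.div_lt_self (by omega) hd.2
      rw [IH (k + 1) (by omega) _ h3 (by omega), mul_zero]

lemma Icc_sum_eq (f : ℕ → ℂ) (N : ℕ) :
    ∑ j ∈ Icc 1 N, f j = ∑ i ∈ range N, f (i + 1) := by
  rw [← Finset.Ico_add_one_right_eq_Icc, Finset.sum_Ico_eq_sum_range]
  simp [add_comm]

lemma sum_ds (g : ℕ → ℂ) : ∀ n, 1 ≤ n → ∀ N, n ≤ N →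
    ∑ j ∈ Icc 1 N, ds g j n = if n = 1 then -1 else 0 := by
  intro n
  induction n using Nat.strong_induction_on with
  | _ n IH =>
    intro h1 N hN
    rcases eq_or_lt_of_le h1 with h | h
    · subst h
      rw [if_pos rfl]
      have key : ∀ j ∈ Icc 1 N, ds g j 1 = if j = 1 then (-1 : ℂ) else 0 := by
        intro j hj
        simp only [Finset.mem_Icc] at hj
        rcases eq_or_ne j 1 with rfl | hne
        · simp [ds, gpm]
        · rw [if_neg hne]
          exact ds_of_lt g j 1 le_rfl (by omega)
      rw [Finset.sum_congr rfl key, Finset.sum_ite_eq' (Icc 1 N) 1 (fun _ => (-1 : ℂ)),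
        if_pos (by simp; omega)]
    · rw [if_neg (by omega), Icc_sum_eq]
      obtain ⟨M, rfl⟩ : ∃ M, N = M + 1 := ⟨N - 1, by omega⟩
      rw [Finset.sum_range_succ']
      have hds1 : ds g 1 n = g n := by
        show gpm g n = g n
        rw [gpm, if_neg (by omega)]
      have key : ∀ i ∈ range M, ds g (i + 2) n
          = ∑ d ∈ n.divisors.filter (fun d => 1 < d), g d * ds g (i + 1) (n / d) :=
        fun i _ => rfl
      rw [Finset.sum_congr rfl key, Finset.sum_comm]
      have inner : ∀ d ∈ n.divisors.filter (fun d => 1 < d),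
          ∑ i ∈ range M, g d * ds g (i + 1) (n / d) = if d = n then -g n else 0 := by
        intro d hd
        simp only [Finset.mem_filter, Nat.mem_divisors] at hd
        have h3 : 1 ≤ n / d :=
          (Nat.one_le_div_iff (by omega)).mpr (Nat.le_of_dvd (by omega) hd.1.1)
        have h4 : n / d < n := Nat.div_lt_self (by omega) hd.2
        have hdm : n / d * d = n := Nat.div_mul_cancel hd.1.1
        rw [← Finset.mul_sum, ← Icc_sum_eq (fun j => ds g j (n / d)) M, IH (n / d) h4 h3 M (by omega)]
        rcases eq_or_ne d n with rfl | hne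
        · rw [if_pos rfl, if_pos (Nat.div_self (by omega))]
          ring
        · rw [if_neg hne, if_neg (by intro hq; rw [hq] at hdm; omega), mul_zero]
      rw [Finset.sum_congr rfl inner,
        Finset.sum_ite_eq' (n.divisors.filter (fun d => 1 < d)) n (fun _ => -g n),
        if_pos (by simp [Nat.mem_divisors]; omega), hds1]
      ring

lemma sum_range_two_mul (f : ℕ → ℂ) (n : ℕ) :
    ∑ i ∈ range (2 * n), f i = ∑ i ∈ range n, (f (2 * i) + f (2 * i + 1)) := by
  induction n with
  | zero => simp
  | succ n ih =>
    rw [Nat.mul_succ, Finset.sum_range_succ, Finset.sum_range_succ, Finset.sum_range_succ, ih]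
    ring

/-- with `D_g(n) := ∑_{j=1}^{n} ds_{2j,g}(n)` (the sum stabilizes),
`g ∗ (D_g + ε) = ε`, i.e. `D_g + ε` is the Dirichlet inverse of `g`. -/
theorem Dg_plus_eps_is_dirichlet_inverse (g : ℕ → ℂ) (hg : g 1 = 1)
    (Dg : ℕ → ℂ) (hD : ∀ n, Dg n = ∑ j ∈ Finset.Icc 1 n, ds g (2 * j) n)
    (n : ℕ) (hn : 1 ≤ n) :
    dconv g (fun m => Dg m + (if m = 1 then 1 else 0)) n = (if n = 1 then 1 else 0) := by
  rcases eq_or_lt_of_le hn with h | h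
  · -- n = 1
    subst h
    have hD1 : Dg 1 = 0 := by
      rw [hD]
      simp only [Finset.Icc_self, Finset.sum_singleton]
      show (∑ d ∈ (1 : ℕ).divisors.filter (fun d => 1 < d), g d * ds g 1 (1 / d)) = 0
      simp [Nat.divisors_one, Finset.filter_singleton]
    simp [dconv, Nat.divisors_one, hD1, hg]
  · -- n ≥ 2
    rw [if_neg (by omega)]
    show (∑ d ∈ n.divisors, g d * (Dg (n / d) + if n / d = 1 then 1 else 0)) = 0
    have h1mem : (1 : ℕ) ∈ n.divisors := Nat.one_mem_divisors.mpr (by omega)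
    rw [← Finset.add_sum_erase _ _ h1mem]
    have herase : n.divisors.erase 1 = n.divisors.filter (fun d => 1 < d) := by
      ext d
      simp only [Finset.mem_erase, Finset.mem_filter, Nat.mem_divisors]
      constructor
      · rintro ⟨hne, hdvd, hn0⟩
        have := Nat.pos_of_dvd_of_pos hdvd (by omega)
        exact ⟨⟨hdvd, hn0⟩, by omega⟩
      · rintro ⟨⟨hdvd, hn0⟩, hlt⟩
        exact ⟨by omega, hdvd, hn0⟩
    rw [herase, hg, one_mul, Nat.div_one, if_neg (by omega : ¬ n = 1), add_zero]
    have split : ∀ d ∈ n.divisors.filter (fun d => 1 < d),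
        g d * (Dg (n / d) + if n / d = 1 then 1 else 0)
        = (∑ j ∈ Icc 1 n, g d * ds g (2 * j) (n / d)) + (if d = n then g n else 0) := by
      intro d hd
      simp only [Finset.mem_filter, Nat.mem_divisors] at hd
      have h3 : 1 ≤ n / d :=
        (Nat.one_le_div_iff (by omega)).mpr (Nat.le_of_dvd (by omega) hd.1.1)
      have hdm : n / d * d = n := Nat.div_mul_cancel hd.1.1
      have hdle : n / d ≤ n := Nat.div_le_self n d
      have hDd : Dg (n / d) = ∑ j ∈ Icc 1 n, ds g (2 * j) (n / d) := by
        rw [hD]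
        apply Finset.sum_subset
        · exact Finset.Icc_subset_Icc_right hdle
        · intro j hj hj'
          simp only [Finset.mem_Icc] at hj hj'
          exact ds_of_lt g (2 * j) (n / d) h3 (by omega)
      rw [hDd, mul_add, Finset.mul_sum]
      congr 1
      rcases eq_or_ne d n with rfl | hne
      · rw [if_pos rfl, if_pos (Nat.div_self (by omega)), mul_one]
      · rw [if_neg hne, if_neg (by intro hq; rw [hq] at hdm; omega), mul_zero]
    rw [Finset.sum_congr rfl split, Finset.sum_add_distrib,
      Finset.sum_ite_eq' (n.divisors.filter (fun d => 1 < d)) n (fun _ => g n),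
      if_pos (by simp [Nat.mem_divisors]; omega), Finset.sum_comm]
    have odd_step : ∀ j ∈ Icc 1 n,
        ∑ d ∈ n.divisors.filter (fun d => 1 < d), g d * ds g (2 * j) (n / d)
        = ds g (2 * j + 1) n := by
      intro j hj
      simp only [Finset.mem_Icc] at hj
      rw [ds_succ g (by omega : 1 ≤ 2 * j) n]
    rw [Finset.sum_congr rfl odd_step, hD]
    -- goal: Dg n + (∑ odd + g n) = 0, i.e. sums of ds
    have hg' : g n = ds g 1 n := by
      show g n = gpm g n
      rw [gpm, if_neg (by omega)]
    have combine : ∑ j ∈ Icc 1 n, ds g (2 * j) n + ∑ j ∈ Icc 1 n, ds g (2 * j + 1) n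
        = ∑ i ∈ range (2 * n), ds g (i + 2) n := by
      rw [sum_range_two_mul (fun i => ds g (i + 2) n) n, ← Finset.sum_add_distrib,
        Icc_sum_eq (fun j => ds g (2 * j) n + ds g (2 * j + 1) n) n]
      apply Finset.sum_congr rfl
      intro i _
      have e1 : 2 * (i + 1) = 2 * i + 2 := by ring
      have e2 : 2 * i + 2 + 1 = 2 * i + 1 + 2 := by ring
      rw [e1, e2]
    have total : ∑ i ∈ range (2 * n), ds g (i + 2) n + ds g 1 n
        = ∑ j ∈ Icc 1 (2 * n + 1), ds g j n := by
      rw [Icc_sum_eq (fun j => ds g j n) (2 * n + 1), Finset.sum_range_succ']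
    have := sum_ds g n (by omega) (2 * n + 1) (by omega)
    rw [if_neg (by omega)] at this
    calc ∑ j ∈ Icc 1 n, ds g (2 * j) n + (∑ j ∈ Icc 1 n, ds g (2 * j + 1) n + g n)
        = (∑ j ∈ Icc 1 n, ds g (2 * j) n + ∑ j ∈ Icc 1 n, ds g (2 * j + 1) n) + ds g 1 n := by
          rw [← hg']; ring
      _ = ∑ i ∈ range (2 * n), ds g (i + 2) n + ds g 1 n := by rw [combine]
      _ = 0 := by rw [total, this]
end
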